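/- For 0 < λ < λ' < Λ(A,B), the critical points of the fiber maps satisfy t⁻(λ) < t⁻(λ') and t⁺(λ') < t⁺(λ); that is, on (0, Λ(A,B)) the map λ ↦ t⁺(λ) is strictly decreasing and λ ↦ t⁻(λ) is strictly increasing. -/

import Mathlib

open Real Set Filter

/-- Fiber map `ψ_λ(t) = (a/2)·A·t² + (λ/4)·A²·t⁴ − (1/γ)·B·t^γ`. -/
noncomputable def psi (a γ A B lam t : ℝ) : ℝ :=
  a / 2 * A * t ^ 2 + lam / 4 * A ^ 2 * t ^ 4 - 1 / γ * B * t ^ γ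

/-- The constant `C_{a,γ} = a·((γ−2)/(4−γ))·((4−γ)/(2a))^(2/(γ−2))`. -/
noncomputable def Cag (a γ : ℝ) : ℝ :=
  a * ((γ - 2) / (4 - γ)) * ((4 - γ) / (2 * a)) ^ (2 / (γ - 2))

/-- The extremal value `Λ(A,B) = C_{a,γ}·B^(2/(γ−2))·A^(−γ/(γ−2))`. -/
noncomputable def Lam (a γ A B : ℝ) : ℝ :=
  Cag a γ * B ^ (2 / (γ - 2)) * A ^ (-(γ / (γ - 2)))

/-- `T(A,B) = (2aA/((4−γ)B))^(1/(γ−2))`. -/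
noncomputable def Tab (a γ A B : ℝ) : ℝ :=
  (2 * a * A / ((4 - γ) * B)) ^ (1 / (γ - 2))

/-! In the variable `u = t⁻²`, a positive `t` is a critical point of `ψ_λ` exactly when
`λ = (B/A²)·u^((4-γ)/2) − (a/A)·u`, and the right-hand side is a concave function of `u`
because `0 < (4-γ)/2 < 1`. A concave function that takes the value `λ` at two points exceeds `λ`
only strictly between them, so the two `u`-values at level `λ' > λ` lie strictly between the two
at level `λ`; undoing `u = t⁻²`, which reverses order, gives the claim. -/

theorem ConcaveOn.mem_Ioo_of_apply_lt {𝕜 β : Type*} [Field 𝕜] [LinearOrder 𝕜]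
    [IsStrictOrderedRing 𝕜] [AddCommMonoid β] [LinearOrder β] [IsOrderedCancelAddMonoid β]
    [Module 𝕜 β] [PosSMulStrictMono 𝕜 β] {s : Set 𝕜} {f : 𝕜 → β} (hf : ConcaveOn 𝕜 s f)
    {x y z : 𝕜} (hx : x ∈ s) (hy : y ∈ s) (hz : z ∈ s) (hxy : x < y) (hfxy : f x = f y)
    (hfz : f x < f z) : z ∈ Ioo x y := by
  have hzx : z ≠ x := by rintro rfl; exact hfz.false
  have hzy : z ≠ y := by rintro rfl; exact (hfxy ▸ hfz).false
  refine ⟨lt_of_not_ge fun hzx' => ?_, lt_of_not_ge fun hyz => ?_⟩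
  · have hmem : x ∈ openSegment 𝕜 z y := by
      rw [openSegment_eq_Ioo ((hzx'.lt_of_ne hzx).trans hxy)]
      exact ⟨hzx'.lt_of_ne hzx, hxy⟩
    exact (hf.lt_right_of_left_lt hz hy hmem hfz).ne hfxy.symm
  · have hmem : y ∈ openSegment 𝕜 x z := by
      rw [openSegment_eq_Ioo (hxy.trans (hyz.lt_of_ne' hzy))]
      exact ⟨hxy, hyz.lt_of_ne' hzy⟩
    exact (hf.left_lt_of_lt_right hx hz hmem (hfxy ▸ hfz)).ne hfxy

noncomputable def critLevel (a γ A B u : ℝ) : ℝ :=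
  B / A ^ 2 * u ^ ((4 - γ) / 2) - a / A * u

theorem concaveOn_critLevel (a A : ℝ) {γ B : ℝ} (hγ2 : 2 ≤ γ) (hγ4 : γ ≤ 4) (hB : 0 ≤ B) :
    ConcaveOn ℝ (Ici 0) (critLevel a γ A B) :=
  ((Real.concaveOn_rpow (by linarith) (by linarith)).smul (c := B / A ^ 2) (by positivity)).sub
    ((LinearMap.mul ℝ ℝ (a / A)).convexOn (convex_Ici 0))

theorem hasDerivAt_psi (a A B lam : ℝ) {γ t : ℝ} (hγ : γ ≠ 0) (ht : 0 < t) :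
    HasDerivAt (psi a γ A B lam) (a * A * t + lam * A ^ 2 * t ^ 3 - B * t ^ (γ - 1)) t := by
  have h2 := (hasDerivAt_pow 2 t).const_mul (a / 2 * A)
  have h4 := (hasDerivAt_pow 4 t).const_mul (lam / 4 * A ^ 2)
  have hγ' := (Real.hasDerivAt_rpow_const (p := γ) (Or.inl ht.ne')).const_mul (1 / γ * B)
  refine ((h2.add h4).sub hγ').congr_deriv ?_
  field_simp
  ring

theorem critLevel_inv_sq_of_deriv_psi_eq_zero (a : ℝ) {γ A B lam t : ℝ} (hγ : γ ≠ 0)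
    (hA : A ≠ 0) (ht : 0 < t) (hcrit : deriv (psi a γ A B lam) t = 0) :
    critLevel a γ A B (t ^ 2)⁻¹ = lam := by
  rw [(hasDerivAt_psi a A B lam hγ ht).deriv] at hcrit
  have hpow : ((t ^ 2)⁻¹) ^ ((4 - γ) / 2) * t ^ 3 = t ^ (γ - 1) := by
    rw [Real.inv_rpow (by positivity), ← Real.rpow_natCast, ← Real.rpow_mul ht.le,
      ← Real.rpow_neg ht.le, ← Real.rpow_natCast, ← Real.rpow_add ht]
    norm_num
    ring_nf
  apply mul_left_cancel₀ (by positivity : A ^ 2 * t ^ 3 ≠ 0)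
  unfold critLevel
  rw [← hpow] at hcrit
  generalize ((t ^ 2)⁻¹) ^ ((4 - γ) / 2) = w at hcrit ⊢
  have hexpand : A ^ 2 * t ^ 3 * (B / A ^ 2 * w - a / A * (t ^ 2)⁻¹) =
      B * (w * t ^ 3) - a * A * t := by
    field_simp
  linear_combination hexpand - hcrit

theorem strictAntiOn_inv_sq : StrictAntiOn (fun t : ℝ => (t ^ 2)⁻¹) (Ioi 0) :=
  fun _ hs _ _ hst => inv_strictAnti₀ (pow_pos hs 2) (pow_lt_pow_left₀ hst (le_of_lt hs) two_ne_zero)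

theorem stmt_14_general (a γ A B lam lam' tminus tplus tminus' tplus' : ℝ)
    (hγ2 : 2 < γ) (hγ4 : γ < 4) (hA : 0 < A) (hB : 0 < B)
    (hlt : lam < lam')
    (htm : 0 < tminus) (horder : tminus < tplus)
    (hc1 : deriv (psi a γ A B lam) tminus = 0)
    (hc2 : deriv (psi a γ A B lam) tplus = 0)
    (htm' : 0 < tminus') (horder' : tminus' < tplus')
    (hc1' : deriv (psi a γ A B lam') tminus' = 0)
    (hc2' : deriv (psi a γ A B lam') tplus' = 0) :
    tminus < tminus' ∧ tplus' < tplus := by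
  have htp : 0 < tplus := htm.trans horder
  have htp' : 0 < tplus' := htm'.trans horder'
  have hlevel {l t : ℝ} (ht : 0 < t) (hc : deriv (psi a γ A B l) t = 0) :
      critLevel a γ A B (t ^ 2)⁻¹ = l :=
    critLevel_inv_sq_of_deriv_psi_eq_zero a (by linarith) hA.ne' ht hc
  have hnonneg (t : ℝ) : (t ^ 2)⁻¹ ∈ Ici (0 : ℝ) := mem_Ici.2 (by positivity)
  have hbetween {t' : ℝ} (ht' : 0 < t') (hc' : deriv (psi a γ A B lam') t' = 0) :
      (t' ^ 2)⁻¹ ∈ Ioo (tplus ^ 2)⁻¹ (tminus ^ 2)⁻¹ :=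
    (concaveOn_critLevel a A hγ2.le hγ4.le hB.le).mem_Ioo_of_apply_lt (hnonneg _) (hnonneg _)
      (hnonneg _) (strictAntiOn_inv_sq htm htp horder)
      ((hlevel htp hc2).trans (hlevel htm hc1).symm)
      (by rw [hlevel htp hc2, hlevel ht' hc']; exact hlt)
  exact ⟨(strictAntiOn_inv_sq.lt_iff_gt htm' htm).1 (hbetween htm' hc1').2,
    (strictAntiOn_inv_sq.lt_iff_gt htp htp').1 (hbetween htp' hc2').1⟩

/-- for `0 < λ < λ' < Λ(A,B)`, the critical points of the fiber maps
satisfy `t⁻(λ) < t⁻(λ')` and `t⁺(λ') < t⁺(λ)`: on `(0, Λ(A,B))`, `λ ↦ t⁺(λ)` is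
strictly decreasing and `λ ↦ t⁻(λ)` is strictly increasing. -/
theorem stmt_14 (a γ A B lam lam' tminus tplus tminus' tplus' : ℝ) (ha : 0 < a)
    (hγ2 : 2 < γ) (hγ4 : γ < 4) (hA : 0 < A) (hB : 0 < B)
    (hlam : 0 < lam) (hlt : lam < lam') (hlt' : lam' < Lam a γ A B)
    (htm : 0 < tminus) (horder : tminus < tplus)
    (hc1 : deriv (psi a γ A B lam) tminus = 0)
    (hc2 : deriv (psi a γ A B lam) tplus = 0)
    (htm' : 0 < tminus') (horder' : tminus' < tplus')
    (hc1' : deriv (psi a γ A B lam') tminus' = 0)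
    (hc2' : deriv (psi a γ A B lam') tplus' = 0) :
    tminus < tminus' ∧ tplus' < tplus :=
  stmt_14_general a γ A B lam lam' tminus tplus tminus' tplus' hγ2 hγ4 hA hB hlt htm horder hc1 hc2
    htm' horder' hc1' hc2'
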